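/- If A is a well-formed λα-term and A → B is a one-step λα-reduction, then FV(A) ≥ FV(B) in the context ordering. -/

import Mathlib

/-!
The context order has an explicit description (`ctxLe_iff`): `Γ ≤ Δ` iff the local list of `Δ`
is that of `Γ` extended on the outside by some `P`, and every global variable of `Γ` is global
in `Δ` or occurs in `P`. Hence `⊔` is a least upper bound, defined as soon as an upper bound
exists, and `O_{λx}` is monotone, since `Φ ≤ (O_{λx} Φ),x` and `O_{λx} Φ ≤ Γ` whenever
`Φ ≤ Γ,x`. Now `FV (S ∘ A)` is `FV A` pushed through a monotone partial map `fvS S`, and a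
monotone partial map is automatically compatible with `⊔`. So every congruence rule keeps `FV`
from growing, each root rule either leaves `FV` unchanged or replaces it by a context below
it, and a derivation of `Γ ⊢ A` shows that `FV A` is defined.
-/

abbrev Var := ℕ
abbrev Ctx := Finset Var × List Var

/-- `Γ,x` : extend the local part with `x` as innermost (rightmost) variable.
Lists represent local contexts with head = outermost (leftmost). -/
def Ctx.snoc (Γ : Ctx) (x : Var) : Ctx := (Γ.1, Γ.2 ++ [x])

/-- The least partial order on contexts generated by
`(G,L) < (G ∪ {x}, L)` for `x ∉ G` and `(G,L) < (G \ {x}, x::L)`. -/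
inductive CtxLe : Ctx → Ctx → Prop
  | refl (Γ : Ctx) : CtxLe Γ Γ
  | trans {Γ Δ Θ : Ctx} : CtxLe Γ Δ → CtxLe Δ Θ → CtxLe Γ Θ
  | glob (G : Finset Var) (L : List Var) (x : Var) (h : x ∉ G) :
      CtxLe (G, L) (insert x G, L)
  | loc (G : Finset Var) (L : List Var) (x : Var) :
      CtxLe (G, L) (G.erase x, x :: L)

def Compatible (Γ Δ : Ctx) : Prop := ∃ Θ, CtxLe Γ Θ ∧ CtxLe Δ Θ

/-- Auxiliary supremum on contexts whose local lists have head = innermost. -/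
def supAux : Finset Var → List Var → Finset Var → List Var → Option (Finset Var × List Var)
  | G₁, [], G₂, [] => some (G₁ ∪ G₂, [])
  | G₁, x :: l₁, G₂, [] =>
      (supAux G₁ l₁ (G₂.erase x) []).map fun p => (p.1, x :: p.2)
  | G₁, [], G₂, x :: l₂ =>
      (supAux (G₁.erase x) [] G₂ l₂).map fun p => (p.1, x :: p.2)
  | G₁, x :: l₁, G₂, y :: l₂ =>
      if x = y then (supAux G₁ l₁ G₂ l₂).map fun p => (p.1, x :: p.2) else none
  termination_by _ l₁ _ l₂ => l₁.length + l₂.length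

/-- The (partial) supremum `Γ ⊔ Δ` of two contexts. -/
def ctxSup (Γ Δ : Ctx) : Option Ctx :=
  (supAux Γ.1 Γ.2.reverse Δ.1 Δ.2.reverse).map fun p => (p.1, p.2.reverse)

/-- The partial operation `O_{λx}` : `O_{λx}(Γ,x) = Γ`, `O_{λx}(G, nil) = (G \ {x}, nil)`,
undefined otherwise. -/
def Olam (x : Var) (Γ : Ctx) : Option Ctx :=
  match Γ.2.reverse with
  | [] => some (Γ.1.erase x, [])
  | y :: l => if y = x then some (Γ.1, l.reverse) else none

mutual
/-- Terms of the calculus λα. -/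
inductive Tm : Type
  | var : Var → Tm
  | app : Tm → Tm → Tm
  | lam : Var → Tm → Tm
  | sub : Sb → Tm → Tm
/-- Substitutions of the calculus λα: `[B/x]`, `Wx`, `{yx}`, `Sₓ`. -/
inductive Sb : Type
  | push : Tm → Var → Sb
  | weak : Var → Sb
  | ren : Var → Var → Sb
  | lift : Sb → Var → Sb
end

mutual
/-- The typing judgement `Γ ⊢ A` of λα (rules R1–R6). -/
inductive Judg : Ctx → Tm → Prop
  | r1 {G : Finset Var} {x : Var} (h : x ∈ G) : Judg (G, []) (.var x)
  | r2 (Γ : Ctx) (x : Var) : Judg (Γ.snoc x) (.var x)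
  | r3 {Γ : Ctx} {x y : Var} (h : x ≠ y) : Judg Γ (.var x) → Judg (Γ.snoc y) (.var x)
  | r4 {Γ A B} : Judg Γ A → Judg Γ B → Judg Γ (.app A B)
  | r5 {Γ x A} : Judg (Ctx.snoc Γ x) A → Judg Γ (.lam x A)
  | r6 {Γ Δ S A} : SJudg Γ S Δ → Judg Δ A → Judg Γ (.sub S A)
/-- The judgement `Γ ⊢ S ▷ Δ` of λα (rules R7–R10). -/
inductive SJudg : Ctx → Sb → Ctx → Prop
  | r7 {Γ B x} : Judg Γ B → SJudg Γ (.push B x) (Γ.snoc x)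
  | r8 (Γ x) : SJudg (Ctx.snoc Γ x) (.weak x) Γ
  | r9 (Γ y x) : SJudg (Ctx.snoc Γ y) (.ren y x) (Ctx.snoc Γ x)
  | r10 {Γ Δ S} (x) : SJudg Γ S Δ → SJudg (Ctx.snoc Γ x) (.lift S x) (Ctx.snoc Δ x)
end

mutual
/-- Weight of a term, used for the termination of `FV`. -/
def wT : Tm → ℕ
  | .var _ => 1
  | .app a b => wT a + wT b + 1
  | .lam _ a => wT a + 1
  | .sub s a => wS s + wT a
/-- Weight of a substitution, used for the termination of `FV`. -/
def wS : Sb → ℕ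
  | .weak _ => 1
  | .push b _ => wT b + 4
  | .ren _ _ => 4
  | .lift s _ => wS s + 3
end

/-- The partial free-variable function of λα, valued in contexts. -/
def FV : Tm → Option Ctx
  | .var x => some ({x}, [])
  | .app A B => do ctxSup (← FV A) (← FV B)
  | .lam x A => do Olam x (← FV A)
  | .sub (.weak x) A => (FV A).map (fun Γ => Ctx.snoc Γ x)
  | .sub (.push B x) A => FV (.app (.lam x A) B)
  | .sub (.ren y x) A => FV (.sub (.weak y) (.lam x A))
  | .sub (.lift S x) A => FV (.sub (.weak x) (.sub S (.lam x A)))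
  termination_by t => wT t
  decreasing_by all_goals simp [wT, wS] <;> omega

/-- `x ∈ Γ` : membership in the global or local part of a context. -/
def memCtx (x : Var) (Γ : Ctx) : Prop := x ∈ Γ.1 ∨ x ∈ Γ.2

mutual
/-- One-step λα-reduction (all rules including Beta and α), closed under
compatible contexts. -/
inductive Step : Tm → Tm → Prop
  | beta {x A B} : Step (.app (.lam x A) B) (.sub (.push B x) A)
  | app {S A B} : Step (.sub S (.app A B)) (.app (.sub S A) (.sub S B))
  | lam {S x A} : Step (.sub S (.lam x A)) (.lam x (.sub (.lift S x) A))
  | var {B x} : Step (.sub (.push B x) (.var x)) B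
  | shift {B x A} : Step (.sub (.push B x) (.sub (.weak x) A)) A
  | shift' {B x z} (h : x ≠ z) : Step (.sub (.push B x) (.var z)) (.var z)
  | idVar {y x} : Step (.sub (.ren y x) (.var x)) (.var y)
  | idShift {y x A} : Step (.sub (.ren y x) (.sub (.weak x) A)) (.sub (.weak y) A)
  | idShift' {y x z} (h : x ≠ z) :
      Step (.sub (.ren y x) (.var z)) (.sub (.weak y) (.var z))
  | liftVar {S x} : Step (.sub (.lift S x) (.var x)) (.var x)
  | liftShift {S x A} :
      Step (.sub (.lift S x) (.sub (.weak x) A)) (.sub (.weak x) (.sub S A))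
  | liftShift' {S x z} (h : x ≠ z) :
      Step (.sub (.lift S x) (.var z)) (.sub (.weak x) (.sub S (.var z)))
  | w {x z} (h : x ≠ z) : Step (.sub (.weak x) (.var z)) (.var z)
  | alpha {x y A Φ} (hFV : FV (.lam x A) = some Φ) (hx : memCtx x Φ)
      (hy : ¬ memCtx y Φ) : Step (.lam x A) (.lam y (.sub (.ren y x) A))
  | lamCong {x A A'} : Step A A' → Step (.lam x A) (.lam x A')
  | appL {A A' B} : Step A A' → Step (.app A B) (.app A' B)
  | appR {A B B'} : Step B B' → Step (.app A B) (.app A B')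
  | subL {S S' A} : SStep S S' → Step (.sub S A) (.sub S' A)
  | subR {S A A'} : Step A A' → Step (.sub S A) (.sub S A')
/-- One-step λα-reduction inside substitutions. -/
inductive SStep : Sb → Sb → Prop
  | push {B B' : Tm} {x} : Step B B' → SStep (.push B x) (.push B' x)
  | lift {S S' : Sb} {x} : SStep S S' → SStep (.lift S x) (.lift S' x)
end

theorem ctxLe_union (G : Finset Var) (L : List Var) (s : Finset Var) :
    CtxLe (G, L) (G ∪ s, L) := by
  induction s using Finset.induction_on with
  | empty => simpa using CtxLe.refl (G, L)
  | insert a s _ ih =>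
    rw [Finset.union_insert]
    by_cases ha : a ∈ G ∪ s
    · rwa [Finset.insert_eq_of_mem ha]
    · exact ih.trans (CtxLe.glob _ _ _ ha)

theorem ctxLe_of_subset {G G' : Finset Var} (L : List Var) (h : G ⊆ G') :
    CtxLe (G, L) (G', L) := by
  simpa [Finset.union_eq_right.mpr h] using ctxLe_union G L G'

theorem ctxLe_of_eq_append {Γ Δ : Ctx} (P : List Var) (hL : Δ.2 = P ++ Γ.2)
    (hG : Γ.1 ⊆ Δ.1 ∪ P.toFinset) : CtxLe Γ Δ := by
  obtain ⟨G, L⟩ := Γ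
  obtain ⟨G', L'⟩ := Δ
  dsimp only at hL hG
  subst hL
  induction P generalizing G' with
  | nil => exact ctxLe_of_subset L (by simpa using hG)
  | cons x P ih =>
    have hG' : G ⊆ insert x G' ∪ P.toFinset := by
      intro a ha
      have := hG ha
      simp only [Finset.mem_union, List.toFinset_cons, Finset.mem_insert] at this ⊢
      tauto
    exact (ih _ hG').trans <| (CtxLe.loc _ _ x).trans <|
      ctxLe_of_subset _ (Finset.erase_insert_subset x G')

theorem ctxLe_iff {Γ Δ : Ctx} :
    CtxLe Γ Δ ↔ ∃ P : List Var, Δ.2 = P ++ Γ.2 ∧ Γ.1 ⊆ Δ.1 ∪ P.toFinset := by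
  refine ⟨fun h => ?_, fun ⟨P, hL, hG⟩ => ctxLe_of_eq_append P hL hG⟩
  induction h with
  | refl Γ => exact ⟨[], by simp⟩
  | trans _ _ ih₁ ih₂ =>
    obtain ⟨P₁, hL₁, hG₁⟩ := ih₁
    obtain ⟨P₂, hL₂, hG₂⟩ := ih₂
    refine ⟨P₂ ++ P₁, by simp [hL₂, hL₁], fun a ha => ?_⟩
    have h₁ := hG₁ ha
    simp only [Finset.mem_union, List.toFinset_append] at h₁ ⊢
    rcases h₁ with h₁ | h₁
    · have h₂ := hG₂ h₁
      simp only [Finset.mem_union] at h₂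
      tauto
    · tauto
  | glob G L x _ => exact ⟨[], by simp, fun a ha => by simp [ha]⟩
  | loc G L x => exact ⟨[x], by simp, fun a ha => by by_cases a = x <;> simp_all⟩

theorem ctxLe_snoc {Γ Δ : Ctx} (x : Var) (h : CtxLe Γ Δ) : CtxLe (Γ.snoc x) (Δ.snoc x) := by
  obtain ⟨P, hL, hG⟩ := ctxLe_iff.mp h
  exact ctxLe_of_eq_append P (by simp [Ctx.snoc, hL]) hG

theorem memCtx_snoc_self (x : Var) (Γ : Ctx) : memCtx x (Γ.snoc x) :=
  Or.inr (by simp [Ctx.snoc])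

theorem singleton_ctxLe_iff {x : Var} {Γ : Ctx} : CtxLe ({x}, []) Γ ↔ memCtx x Γ := by
  rw [ctxLe_iff, memCtx]
  constructor
  · rintro ⟨P, hL, hG⟩
    simpa [hL] using hG (Finset.mem_singleton_self x)
  · intro h
    exact ⟨Γ.2, by simp, by simpa using h⟩

/-- `OptLe o' o`: whenever `o` is defined, so is `o'`, and below it. -/
def OptLe (o' o : Option Ctx) : Prop := ∀ Φ ∈ o, ∃ Φ' ∈ o', CtxLe Φ' Φ

theorem OptLe.refl (o : Option Ctx) : OptLe o o :=
  fun Φ hΦ => ⟨Φ, hΦ, CtxLe.refl Φ⟩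

theorem OptLe.of_eq {o' o : Option Ctx} (h : o' = o) : OptLe o' o :=
  h ▸ OptLe.refl o

theorem OptLe.trans {o'' o' o : Option Ctx} (h₁ : OptLe o'' o') (h₂ : OptLe o' o) :
    OptLe o'' o := fun Φ hΦ =>
  let ⟨_, hΦ', h'⟩ := h₂ Φ hΦ
  let ⟨Φ'', hΦ'', h''⟩ := h₁ _ hΦ'
  ⟨Φ'', hΦ'', h''.trans h'⟩

theorem optLe_some_iff {o : Option Ctx} {Γ : Ctx} : OptLe o (some Γ) ↔ ∃ Φ ∈ o, CtxLe Φ Γ :=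
  ⟨fun h => h Γ rfl, fun h _ hΓ => Option.some_injective _ hΓ ▸ h⟩

theorem some_optLe_some {Φ' Φ : Ctx} (h : CtxLe Φ' Φ) : OptLe (some Φ') (some Φ) :=
  optLe_some_iff.mpr ⟨Φ', rfl, h⟩

theorem OptLe.bind {o' o : Option Ctx} {f g : Ctx → Option Ctx} (ho : OptLe o' o)
    (hfg : ∀ ⦃Φ' Φ⦄, CtxLe Φ' Φ → OptLe (f Φ') (g Φ)) : OptLe (o'.bind f) (o.bind g) := by
  intro Θ hΘ
  obtain ⟨Φ, hΦ, hgΦ⟩ := Option.bind_eq_some_iff.mp hΘ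
  obtain ⟨Φ', hΦ', hle⟩ := ho Φ hΦ
  obtain ⟨Θ', hΘ', hle'⟩ := hfg hle Θ hgΦ
  exact ⟨Θ', Option.bind_eq_some_iff.mpr ⟨Φ', hΦ', hΘ'⟩, hle'⟩

theorem OptLe.map {o' o : Option Ctx} {f g : Ctx → Ctx} (ho : OptLe o' o)
    (hfg : ∀ ⦃Φ' Φ⦄, CtxLe Φ' Φ → CtxLe (f Φ') (g Φ)) : OptLe (o'.map f) (o.map g) := by
  rw [Option.map_eq_bind, Option.map_eq_bind]
  exact ho.bind fun _ _ h => some_optLe_some (hfg h)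

def CtxMonotone (f : Ctx → Option Ctx) : Prop :=
  ∀ ⦃Φ' Φ⦄, CtxLe Φ' Φ → OptLe (f Φ') (f Φ)

theorem supAux_comm (G₁ : Finset Var) (l₁ : List Var) (G₂ : Finset Var) (l₂ : List Var) :
    supAux G₁ l₁ G₂ l₂ = supAux G₂ l₂ G₁ l₁ := by
  fun_induction supAux G₁ l₁ G₂ l₂ <;> simp_all [supAux, Finset.union_comm, eq_comm]

theorem ctxSup_comm (Φ₁ Φ₂ : Ctx) : ctxSup Φ₁ Φ₂ = ctxSup Φ₂ Φ₁ := by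
  rw [ctxSup, ctxSup, supAux_comm]

theorem supAux_nil_left (G₁ G₂ : Finset Var) (l : List Var) :
    supAux G₁ [] G₂ l = some (G₁ \ l.toFinset ∪ G₂, l) := by
  induction l generalizing G₁ with
  | nil => simp [supAux]
  | cons x l ih =>
    rw [supAux, ih, Option.map_some]
    congr 2
    ext a
    simp only [Finset.mem_union, Finset.mem_sdiff, Finset.mem_erase, List.toFinset_cons,
      Finset.mem_insert]
    tauto

theorem supAux_append_right (G₁ G₂ : Finset Var) (r l : List Var) :
    supAux G₁ r G₂ (r ++ l) = some (G₁ \ l.toFinset ∪ G₂, r ++ l) := by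
  induction r with
  | nil => exact supAux_nil_left G₁ G₂ l
  | cons x r ih => simp [supAux, ih]

theorem ctxSup_append_right (G₁ G₂ : Finset Var) (L P : List Var) :
    ctxSup (G₁, L) (G₂, P ++ L) = some (G₁ \ P.toFinset ∪ G₂, P ++ L) := by
  simp [ctxSup, supAux_append_right]

theorem prefix_or_prefix_of_supAux_eq_some {G₁ G₂ : Finset Var} {l₁ l₂ : List Var}
    {p : Finset Var × List Var} (h : supAux G₁ l₁ G₂ l₂ = some p) : l₁ <+: l₂ ∨ l₂ <+: l₁ := by
  fun_induction supAux G₁ l₁ G₂ l₂ generalizing p with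
  | case4 G₁ x l₁ G₂ l₂ ih =>
    obtain ⟨p', hp', -⟩ := Option.map_eq_some_iff.mp h
    simpa using ih hp'
  | _ => simp_all

theorem suffix_or_suffix_of_ctxSup_eq_some {Φ₁ Φ₂ Ψ : Ctx} (h : ctxSup Φ₁ Φ₂ = some Ψ) :
    Φ₁.2 <:+ Φ₂.2 ∨ Φ₂.2 <:+ Φ₁.2 := by
  obtain ⟨p, hp, -⟩ := Option.map_eq_some_iff.mp h
  simpa only [List.reverse_prefix] using prefix_or_prefix_of_supAux_eq_some hp

theorem le_ctxSup_append_right (G₁ G₂ : Finset Var) (L P : List Var) :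
    CtxLe (G₁, L) (G₁ \ P.toFinset ∪ G₂, P ++ L) ∧
      CtxLe (G₂, P ++ L) (G₁ \ P.toFinset ∪ G₂, P ++ L) := by
  refine ⟨ctxLe_of_eq_append P rfl fun a ha => ?_,
    ctxLe_of_eq_append [] rfl fun a ha => by simp [ha]⟩
  by_cases a ∈ P <;> simp_all

theorem le_ctxSup {Φ₁ Φ₂ Ψ : Ctx} (h : ctxSup Φ₁ Φ₂ = some Ψ) : CtxLe Φ₁ Ψ ∧ CtxLe Φ₂ Ψ := by
  obtain ⟨G₁, L₁⟩ := Φ₁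
  obtain ⟨G₂, L₂⟩ := Φ₂
  rcases suffix_or_suffix_of_ctxSup_eq_some h with ⟨P, rfl⟩ | ⟨P, rfl⟩
  · rw [ctxSup_append_right, Option.some_inj] at h
    exact h ▸ le_ctxSup_append_right G₁ G₂ L₁ P
  · rw [ctxSup_comm, ctxSup_append_right, Option.some_inj] at h
    exact h ▸ (le_ctxSup_append_right G₂ G₁ L₂ P).symm

theorem ctxSup_append_right_le {G₁ G₂ : Finset Var} {L P : List Var} {Θ : Ctx}
    (h₁ : CtxLe (G₁, L) Θ) (h₂ : CtxLe (G₂, P ++ L) Θ) :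
    CtxLe (G₁ \ P.toFinset ∪ G₂, P ++ L) Θ := by
  obtain ⟨P₁, hL₁, hG₁⟩ := ctxLe_iff.mp h₁
  obtain ⟨P₂, hL₂, hG₂⟩ := ctxLe_iff.mp h₂
  have hP : P₁ = P₂ ++ P := List.append_cancel_right (by rw [← hL₁, hL₂, List.append_assoc])
  refine ctxLe_of_eq_append P₂ hL₂ fun a ha => ?_
  rcases Finset.mem_union.mp ha with ha | ha
  · have := hG₁ (Finset.mem_sdiff.mp ha).1
    simp only [hP, Finset.mem_union, List.toFinset_append] at this ⊢
    simp_all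
  · exact hG₂ ha

theorem ctxSup_optLe_of_le {Φ₁ Φ₂ Θ : Ctx} (h₁ : CtxLe Φ₁ Θ) (h₂ : CtxLe Φ₂ Θ) :
    OptLe (ctxSup Φ₁ Φ₂) (some Θ) := by
  obtain ⟨G₁, L₁⟩ := Φ₁
  obtain ⟨G₂, L₂⟩ := Φ₂
  obtain ⟨P₁, hL₁, -⟩ := ctxLe_iff.mp h₁
  obtain ⟨P₂, hL₂, -⟩ := ctxLe_iff.mp h₂
  rcases List.suffix_or_suffix_of_suffix ⟨P₁, hL₁.symm⟩ ⟨P₂, hL₂.symm⟩ with ⟨P, rfl⟩ | ⟨P, rfl⟩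
  · rw [ctxSup_append_right]
    exact some_optLe_some (ctxSup_append_right_le h₁ h₂)
  · rw [ctxSup_comm, ctxSup_append_right]
    exact some_optLe_some (ctxSup_append_right_le h₂ h₁)

theorem ctxSup_mono {Φ₁' Φ₁ Φ₂' Φ₂ : Ctx} (h₁ : CtxLe Φ₁' Φ₁) (h₂ : CtxLe Φ₂' Φ₂) :
    OptLe (ctxSup Φ₁' Φ₂') (ctxSup Φ₁ Φ₂) := fun _ hΨ =>
  ctxSup_optLe_of_le (h₁.trans (le_ctxSup hΨ).1) (h₂.trans (le_ctxSup hΨ).2) _ rfl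

theorem ctxSup_empty_left (Φ : Ctx) : ctxSup (∅, []) Φ = some Φ := by
  simpa using ctxSup_append_right ∅ Φ.1 [] Φ.2

theorem optLe_bind_ctxSup (o o' : Option Ctx) :
    OptLe o (o.bind fun Φ => o'.bind (ctxSup Φ)) := by
  intro Ψ hΨ
  obtain ⟨Φ, hΦ, Φ', -, h⟩ : ∃ Φ ∈ o, ∃ Φ' ∈ o', ctxSup Φ Φ' = some Ψ := by
    simpa [Option.bind_eq_some_iff] using hΨ
  exact ⟨Φ, hΦ, (le_ctxSup h).1⟩

theorem Olam_nil (x : Var) (G : Finset Var) : Olam x (G, []) = some (G.erase x, []) := rfl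

theorem Olam_snoc (x : Var) (Γ : Ctx) : Olam x (Γ.snoc x) = some Γ := by
  simp [Olam, Ctx.snoc]

theorem Olam_singleton_self (x : Var) : Olam x ({x}, []) = some (∅, []) := by
  simp [Olam_nil]

theorem Olam_singleton_of_ne {x z : Var} (h : x ≠ z) : Olam x ({z}, []) = some ({z}, []) := by
  simp [Olam_nil, Finset.erase_eq_of_notMem, h]

theorem le_snoc_of_Olam_eq_some {x : Var} {Φ Ψ : Ctx} (h : Olam x Φ = some Ψ) :
    CtxLe Φ (Ψ.snoc x) := by
  obtain ⟨G, L⟩ := Φ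
  cases L using List.reverseRecOn with
  | nil =>
    rw [Olam_nil, Option.some_inj] at h
    subst h
    exact ctxLe_of_eq_append [x] rfl fun a ha => by by_cases a = x <;> simp_all [Ctx.snoc]
  | append_singleton L y =>
    simp only [Olam, List.reverse_append, List.reverse_cons, List.reverse_nil,
      List.nil_append, List.singleton_append, List.reverse_reverse] at h
    split_ifs at h with hy
    rw [Option.some_inj] at h
    subst h hy
    exact CtxLe.refl _

theorem Olam_optLe_of_le_snoc {x : Var} {Φ Γ : Ctx} (h : CtxLe Φ (Γ.snoc x)) :
    OptLe (Olam x Φ) (some Γ) := by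
  obtain ⟨P, hL, hG⟩ := ctxLe_iff.mp h
  obtain ⟨G, L⟩ := Φ
  simp only [Ctx.snoc] at hL hG
  cases L using List.reverseRecOn with
  | nil =>
    rw [List.append_nil] at hL
    rw [Olam_nil]
    refine some_optLe_some (ctxLe_of_eq_append Γ.2 (List.append_nil _).symm fun a ha => ?_)
    have hx := Finset.ne_of_mem_erase ha
    have hG := hG (Finset.mem_of_mem_erase ha)
    simp only [← hL, Finset.mem_union, List.toFinset_append, List.mem_toFinset,
      List.mem_singleton] at hG ⊢
    tauto
  | append_singleton L y =>
    rw [← List.append_assoc] at hL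
    obtain ⟨hL', hxy⟩ := List.append_inj' hL rfl
    obtain rfl : x = y := by simpa using hxy
    rw [show (G, L ++ [x]) = Ctx.snoc (G, L) x from rfl, Olam_snoc]
    exact some_optLe_some (ctxLe_of_eq_append P hL' hG)

theorem Olam_monotone (x : Var) : CtxMonotone (Olam x) := fun _ _ h Ψ hΨ =>
  Olam_optLe_of_le_snoc (h.trans (le_snoc_of_Olam_eq_some hΨ)) Ψ rfl

theorem CtxMonotone.optLe_ctxSup {f : Ctx → Option Ctx} (hf : CtxMonotone f) {Φ₁ Φ₂ Ψ : Ctx}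
    (h : ctxSup Φ₁ Φ₂ = some Ψ) :
    OptLe ((f Φ₁).bind fun Θ₁ => (f Φ₂).bind (ctxSup Θ₁)) (f Ψ) := by
  intro Θ hΘ
  obtain ⟨Θ₁, hΘ₁, h₁⟩ := hf (le_ctxSup h).1 Θ hΘ
  obtain ⟨Θ₂, hΘ₂, h₂⟩ := hf (le_ctxSup h).2 Θ hΘ
  obtain ⟨Θ', hΘ', h'⟩ := ctxSup_optLe_of_le h₁ h₂ Θ rfl
  exact ⟨Θ', by simp [Option.mem_def.mp hΘ₁, Option.mem_def.mp hΘ₂, hΘ'], h'⟩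

def fvS : Sb → Ctx → Option Ctx
  | .weak x, Φ => some (Φ.snoc x)
  | .push B x, Φ => (Olam x Φ).bind fun W => (FV B).bind (ctxSup W)
  | .ren y x, Φ => (Olam x Φ).map (·.snoc y)
  | .lift S x, Φ => ((Olam x Φ).bind (fvS S)).map (·.snoc x)

theorem FV_var (x : Var) : FV (.var x) = some ({x}, []) := FV.eq_1 x

theorem FV_app (A B : Tm) : FV (.app A B) = (FV A).bind fun Φ => (FV B).bind (ctxSup Φ) :=
  FV.eq_2 A B

theorem FV_lam (x : Var) (A : Tm) : FV (.lam x A) = (FV A).bind (Olam x) := FV.eq_3 x A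

theorem FV_sub : ∀ (S : Sb) (A : Tm), FV (.sub S A) = (FV A).bind (fvS S)
  | .weak x, A => by rw [FV.eq_4]; cases FV A <;> rfl
  | .push B x, A => by rw [FV.eq_5, FV_app, FV_lam, Option.bind_assoc]; rfl
  | .ren y x, A => by rw [FV.eq_6, FV.eq_4, FV_lam]; cases FV A <;> rfl
  | .lift S x, A => by
    rw [FV.eq_7, FV.eq_4, FV_sub S, FV_lam, Option.bind_assoc]; cases FV A <;> rfl

theorem FV_sub_var (S : Sb) (x : Var) : FV (.sub S (.var x)) = fvS S ({x}, []) := by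
  rw [FV_sub, FV_var, Option.bind_some]

theorem FV_sub_weak (S : Sb) (x : Var) (A : Tm) :
    FV (.sub S (.sub (.weak x) A)) = (FV A).bind fun Φ => fvS S (Φ.snoc x) := by
  rw [FV_sub, FV_sub, Option.bind_assoc]; rfl

theorem fvS_monotone : ∀ S : Sb, CtxMonotone (fvS S)
  | .weak x, _, _, h => some_optLe_some (ctxLe_snoc x h)
  | .push B x, _, _, h => (Olam_monotone x h).bind fun _ _ hW =>
    (OptLe.refl (FV B)).bind fun _ _ hB => ctxSup_mono hW hB
  | .ren y x, _, _, h => (Olam_monotone x h).map fun _ _ => ctxLe_snoc y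
  | .lift S x, _, _, h => ((Olam_monotone x h).bind (fvS_monotone S)).map fun _ _ => ctxLe_snoc x

theorem FV_var_optLe_iff {x : Var} {Γ : Ctx} : OptLe (FV (.var x)) (some Γ) ↔ memCtx x Γ := by
  simp [FV_var, optLe_some_iff, singleton_ctxLe_iff]

mutual
theorem Judg.FV_optLe {Γ : Ctx} {A : Tm} : Judg Γ A → OptLe (FV A) (some Γ)
  | .r1 hx => FV_var_optLe_iff.mpr (Or.inl hx)
  | .r2 Γ x => FV_var_optLe_iff.mpr (memCtx_snoc_self x Γ)
  | .r3 _ hx => FV_var_optLe_iff.mpr <| by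
    simpa [memCtx, Ctx.snoc, or_assoc] using Or.inl (FV_var_optLe_iff.mp hx.FV_optLe)
  | .r4 hA hB => by
    obtain ⟨ΦA, hΦA, hA⟩ := optLe_some_iff.mp hA.FV_optLe
    obtain ⟨ΦB, hΦB, hB⟩ := optLe_some_iff.mp hB.FV_optLe
    rw [FV_app, Option.mem_def.mp hΦA, Option.mem_def.mp hΦB]
    exact ctxSup_optLe_of_le hA hB
  | .r5 (x := x) hA => by
    rw [FV_lam, ← Olam_snoc x Γ]
    exact hA.FV_optLe.bind (Olam_monotone x)
  | .r6 (S := S) hS hA => by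
    rw [FV_sub]
    exact (hA.FV_optLe.bind (fvS_monotone S)).trans hS.fvS_optLe
theorem SJudg.fvS_optLe {Γ Δ : Ctx} {S : Sb} : SJudg Γ S Δ → OptLe (fvS S Δ) (some Γ)
  | .r7 (x := x) hB => by
    obtain ⟨ΦB, hΦB, hB⟩ := optLe_some_iff.mp hB.FV_optLe
    simp only [fvS, Olam_snoc, Option.bind_some, Option.mem_def.mp hΦB]
    exact ctxSup_optLe_of_le (CtxLe.refl Γ) hB
  | .r8 Γ x => OptLe.refl _
  | .r9 Γ y x => by simp only [fvS, Olam_snoc, Option.map_some]; exact OptLe.refl _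
  | .r10 x hS => by
    simp only [fvS, Olam_snoc, Option.bind_some]
    exact hS.fvS_optLe.map fun _ _ => ctxLe_snoc x
end

theorem optLe_FV_sub_app (S : Sb) (A B : Tm) :
    OptLe (FV (.app (.sub S A) (.sub S B))) (FV (.sub S (.app A B))) := by
  intro Θ hΘ
  rw [FV_sub, FV_app] at hΘ
  obtain ⟨Ψ, hΨ, hΘ⟩ := Option.bind_eq_some_iff.mp hΘ
  obtain ⟨ΦA, hA, hΨ⟩ := Option.bind_eq_some_iff.mp hΨ
  obtain ⟨ΦB, hB, hΨ⟩ := Option.bind_eq_some_iff.mp hΨ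
  obtain ⟨Θ', hΘ', hle⟩ := (fvS_monotone S).optLe_ctxSup hΨ Θ hΘ
  exact ⟨Θ', by simpa [FV_app, FV_sub, hA, hB] using hΘ', hle⟩

theorem FV_lam_sub_lift (S : Sb) (x : Var) (A : Tm) :
    FV (.lam x (.sub (.lift S x) A)) = FV (.sub S (.lam x A)) := by
  rw [FV_lam, FV.eq_7, FV.eq_4]
  cases FV (.sub S (.lam x A)) <;> simp [Olam_snoc]

theorem FV_push_var (B : Tm) (x : Var) : FV (.sub (.push B x) (.var x)) = FV B := by
  simp [FV_sub_var, fvS, Olam_singleton_self, ctxSup_empty_left]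

theorem optLe_FV_push_weak (B : Tm) (x : Var) (A : Tm) :
    OptLe (FV A) (FV (.sub (.push B x) (.sub (.weak x) A))) := by
  simpa only [FV_sub_weak, fvS, Olam_snoc, Option.bind_some] using optLe_bind_ctxSup _ _

theorem optLe_FV_push_var_of_ne (B : Tm) {x z : Var} (h : x ≠ z) :
    OptLe (FV (.var z)) (FV (.sub (.push B x) (.var z))) := by
  rw [FV_sub_var, fvS, Olam_singleton_of_ne h, ← FV_var]
  exact optLe_bind_ctxSup _ _

theorem optLe_FV_ren_var (y x : Var) : OptLe (FV (.var y)) (FV (.sub (.ren y x) (.var x))) := by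
  rw [FV_sub_var, fvS, Olam_singleton_self, Option.map_some]
  exact FV_var_optLe_iff.mpr (memCtx_snoc_self y _)

theorem FV_ren_weak (y x : Var) (A : Tm) :
    FV (.sub (.ren y x) (.sub (.weak x) A)) = FV (.sub (.weak y) A) := by
  rw [FV_sub_weak, FV_sub]
  cases FV A <;> simp [fvS, Olam_snoc]

theorem FV_ren_var_of_ne (y : Var) {x z : Var} (h : x ≠ z) :
    FV (.sub (.ren y x) (.var z)) = FV (.sub (.weak y) (.var z)) := by
  simp only [FV_sub_var, fvS, Olam_singleton_of_ne h, Option.map_some]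

theorem optLe_FV_lift_var (S : Sb) (x : Var) :
    OptLe (FV (.var x)) (FV (.sub (.lift S x) (.var x))) := by
  rw [FV_sub_var, fvS, Olam_singleton_self, Option.bind_some]
  intro _ hΘ
  obtain ⟨Θ, -, rfl⟩ := Option.map_eq_some_iff.mp hΘ
  exact optLe_some_iff.mp (FV_var_optLe_iff.mpr (memCtx_snoc_self x Θ))

theorem FV_lift_weak (S : Sb) (x : Var) (A : Tm) :
    FV (.sub (.lift S x) (.sub (.weak x) A)) = FV (.sub (.weak x) (.sub S A)) := by
  rw [FV_sub_weak, FV.eq_4, FV_sub]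
  cases FV A <;> simp [fvS, Olam_snoc]

theorem FV_lift_var_of_ne (S : Sb) {x z : Var} (h : x ≠ z) :
    FV (.sub (.lift S x) (.var z)) = FV (.sub (.weak x) (.sub S (.var z))) := by
  rw [FV_sub_var, FV.eq_4, FV_sub_var, fvS, Olam_singleton_of_ne h, Option.bind_some]

theorem optLe_FV_weak_var (x z : Var) : OptLe (FV (.var z)) (FV (.sub (.weak x) (.var z))) := by
  rw [FV_sub_var]
  exact FV_var_optLe_iff.mpr (Or.inl (Finset.mem_singleton_self z))

theorem FV_lam_ren (y x : Var) (A : Tm) : FV (.lam y (.sub (.ren y x) A)) = FV (.lam x A) := by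
  rw [FV_lam, FV_sub, FV_lam]
  cases FV A with
  | none => rfl
  | some Φ =>
    rw [Option.bind_some, Option.bind_some, fvS]
    cases Olam x Φ <;> simp [Olam_snoc]

mutual
theorem Step.FV_optLe {A B : Tm} : Step A B → OptLe (FV B) (FV A)
  | .beta (x := x) (A := A) (B := B) => .of_eq (FV.eq_5 B x A)
  | .app => optLe_FV_sub_app _ _ _
  | .lam => .of_eq (FV_lam_sub_lift _ _ _)
  | .var => .of_eq (FV_push_var _ _).symm
  | .shift => optLe_FV_push_weak _ _ _
  | .shift' h => optLe_FV_push_var_of_ne _ h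
  | .idVar => optLe_FV_ren_var _ _
  | .idShift => .of_eq (FV_ren_weak _ _ _).symm
  | .idShift' h => .of_eq (FV_ren_var_of_ne _ h).symm
  | .liftVar => optLe_FV_lift_var _ _
  | .liftShift => .of_eq (FV_lift_weak _ _ _).symm
  | .liftShift' h => .of_eq (FV_lift_var_of_ne _ h).symm
  | .w _ => optLe_FV_weak_var _ _
  | .alpha _ _ _ => .of_eq (FV_lam_ren _ _ _)
  | .lamCong (x := x) h => by
    rw [FV_lam, FV_lam]
    exact h.FV_optLe.bind (Olam_monotone x)
  | .appL h => by
    rw [FV_app, FV_app]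
    exact h.FV_optLe.bind fun _ _ hA => (OptLe.refl _).bind fun _ _ hB => ctxSup_mono hA hB
  | .appR h => by
    rw [FV_app, FV_app]
    exact (OptLe.refl _).bind fun _ _ hA => h.FV_optLe.bind fun _ _ hB => ctxSup_mono hA hB
  | .subL (S' := S') h => by
    rw [FV_sub, FV_sub]
    exact (OptLe.refl _).bind fun _ _ hΦ => (fvS_monotone S' hΦ).trans (h.fvS_optLe _)
  | .subR (S := S) h => by
    rw [FV_sub, FV_sub]
    exact h.FV_optLe.bind (fvS_monotone S)
theorem SStep.fvS_optLe {S S' : Sb} : SStep S S' → ∀ Φ, OptLe (fvS S' Φ) (fvS S Φ)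
  | .push h, _ => (OptLe.refl _).bind fun _ _ hW =>
    h.FV_optLe.bind fun _ _ hB => ctxSup_mono hW hB
  | .lift (S' := S') (x := x) h, _ =>
    ((OptLe.refl _).bind fun _ _ hΦ => (fvS_monotone S' hΦ).trans (h.fvS_optLe _)).map
      fun _ _ => ctxLe_snoc x
end

/-- Free variables do not increase along λα-reduction of well-formed terms. -/
theorem FV_decreasing (A B : Tm) (hwf : ∃ Γ : Ctx, Judg Γ A) (h : Step A B) :
    ∃ Φa Φb : Ctx, FV A = some Φa ∧ FV B = some Φb ∧ CtxLe Φb Φa := by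
  obtain ⟨Γ, hA⟩ := hwf
  obtain ⟨Φa, hΦa, -⟩ := optLe_some_iff.mp hA.FV_optLe
  obtain ⟨Φb, hΦb, hle⟩ := h.FV_optLe Φa hΦa
  exact ⟨Φa, Φb, hΦa, hΦb, hle⟩
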